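/- arXiv:2509.08006 — 8 statements merged into one kernel-verified Lean document; each statement's English description precedes it below -/
import Mathlib

section
/- The fixed point h* of ḣ = h²r_GG + h(1−h)(r_GB+r_BG) + (1−h)²r_BB − h equals 1 and is stable (i.e., h*=1 is a root and the derivative of the right-hand side at h=1 is negative) if and only if r_GG = 1 and r_GB + r_BG > 1. -/
theorem hasDerivAt_reputation_rhs (a b c x : ℝ) :
    HasDerivAt (fun h : ℝ => h ^ 2 * a + h * (1 - h) * b + (1 - h) ^ 2 * c - h)
      (2 * x * a + (1 - 2 * x) * b - 2 * (1 - x) * c - 1) x := by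
  have hid := hasDerivAt_id' x
  have hcompl := hid.const_sub 1
  refine (((((hid.pow 2).mul_const a).add ((hid.mul hcompl).mul_const b)).add
    ((hcompl.pow 2).mul_const c)).sub hid).congr_deriv ?_
  push_cast
  ring

theorem stmt_6_general (rGG rGB rBG rBB : ℝ)
    (f : ℝ → ℝ)
    (hf : ∀ h : ℝ, f h = h^2 * rGG + h * (1 - h) * (rGB + rBG) + (1 - h)^2 * rBB - h) :
    (f 1 = 0 ∧ deriv f 1 < 0) ↔ (rGG = 1 ∧ rGB + rBG > 1) := by
  have hval : f 1 = rGG - 1 := by rw [hf]; ring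
  have hderiv : deriv f 1 = 2 * rGG - (rGB + rBG) - 1 := by
    rw [funext hf, (hasDerivAt_reputation_rhs rGG (rGB + rBG) rBB 1).deriv]
    ring
  rw [hval, hderiv]
  constructor <;> rintro ⟨h₁, h₂⟩ <;> constructor <;> linarith

/-- The fixed point `h* = 1` of the reputation dynamics exists and is stable
(`f(1) = 0` and `f'(1) < 0`) if and only if `r_GG = 1` and `r_GB + r_BG > 1`. -/
theorem stmt_6 (rGG rGB rBG rBB : ℝ)
    (hGG : rGG ∈ Set.Icc (0 : ℝ) 1) (hGB : rGB ∈ Set.Icc (0 : ℝ) 1)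
    (hBG : rBG ∈ Set.Icc (0 : ℝ) 1) (hBB : rBB ∈ Set.Icc (0 : ℝ) 1)
    (f : ℝ → ℝ)
    (hf : ∀ h : ℝ, f h = h^2 * rGG + h * (1 - h) * (rGB + rBG) + (1 - h)^2 * rBB - h) :
    (f 1 = 0 ∧ deriv f 1 < 0) ↔ (rGG = 1 ∧ rGB + rBG > 1) :=
  stmt_6_general rGG rGB rBG rBB f hf
end

section
/- For the L6 (Stern Judging) norm with assessment error rate μ ∈ [0, 1/2), implementation error rate μ_e ∈ [0,1), and perception error rate ε_DC ∈ [0,1), the norm is an ESS if and only if b/c > 1/((1−ε_DC)(1−μ_e)(1−2μ)). Equivalently, the condition [R̃*(·,G,C)^‡ − R̃*(·,G,D)^‡]·b > c (for cooperation contexts) with Δv = b reduces to b(1−ε_DC)(1−μ_e)(1−2μ) > c. -/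
/-- L6 (Stern Judging) with assessment error `μ`, implementation error `μ_e`
and perception error `ε_DC` is an ESS iff `b/c > 1/((1-ε_DC)(1-μ_e)(1-2μ))`.
The ESS condition is `[R̃‡(·,G,C) - R̃‡(·,G,D)]·Δv‡ > c‡` in cooperation
contexts and `[R̃‡(·,B,C) - R̃‡(·,B,D)]·Δv‡ < c‡` in defection contexts,
with `Δv‡ = b‡`. -/
theorem stmt_7 (μ μe ε b c : ℝ)
    (hμ : μ ∈ Set.Ico (0 : ℝ) (1/2)) (hμe : μe ∈ Set.Ico (0 : ℝ) 1)
    (hε : ε ∈ Set.Ico (0 : ℝ) 1) (hb : 0 < b) (hc : 0 < c)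
    (tilde : ℝ → ℝ) (htilde : ∀ R : ℝ, tilde R = (1 - μ) * R + μ * (1 - R))
    -- effective assessment values for a good recipient (L6: R(·,G,C)=1, R(·,G,D)=0)
    (RdCG RdDG RdCB RdDB bd cd Δvd : ℝ)
    (hRdDG : RdDG = (1 - ε) * tilde 0 + ε * tilde 1)
    (hRdCG : RdCG = (1 - μe) * tilde 1 + μe * RdDG)
    -- effective assessment values for a bad recipient (L6: R(·,B,C)=0, R(·,B,D)=1)
    (hRdDB : RdDB = (1 - ε) * tilde 1 + ε * tilde 0)
    (hRdCB : RdCB = (1 - μe) * tilde 0 + μe * RdDB)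
    (hbd : bd = (1 - μe) * b) (hcd : cd = (1 - μe) * c) (hΔvd : Δvd = bd) :
    ((RdCG - RdDG) * Δvd > cd ∧ (RdCB - RdDB) * Δvd < cd) ↔
      b / c > 1 / ((1 - ε) * (1 - μe) * (1 - 2 * μ)) := by
  obtain ⟨hμ0, hμ1⟩ := hμ
  obtain ⟨hμe0, hμe1⟩ := hμe
  obtain ⟨hε0, hε1⟩ := hε
  have h1 : 0 < 1 - ε := by linarith
  have h2 : 0 < 1 - μe := by linarith
  have h3 : 0 < 1 - 2 * μ := by linarith
  have hK : 0 < (1 - ε) * (1 - μe) * (1 - 2 * μ) := by positivity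
  subst hRdDG hRdCG hRdDB hRdCB hbd hcd hΔvd
  rw [htilde, htilde]
  have hiff : b / c > 1 / ((1 - ε) * (1 - μe) * (1 - 2 * μ)) ↔
      c < (1 - ε) * (1 - μe) * (1 - 2 * μ) * b := by
    rw [gt_iff_lt, div_lt_div_iff₀ hK hc]
    constructor <;> intro h <;> nlinarith
  rw [hiff]
  constructor
  · rintro ⟨h1, _⟩
    nlinarith [mul_pos hb hc, sq_nonneg (1-μe)]
  · intro h
    constructor
    · nlinarith [sq_nonneg (1-μe)]
    · nlinarith [mul_pos hK (mul_pos (by nlinarith : (0:ℝ) < 1 - μe) hb)]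
end

section
/- The ESS conditions of L3 (Simple Standing) and L6 (Stern Judging) are identical: both norms are ESS if and only if b/c > 1/((1−2μ)(1−μ_e)(1−ε_DC)), for μ ∈ [0,1/2), μ_e, ε_DC ∈ [0,1), b > c > 0. -/
/-- L3 (Simple Standing) and L6 (Stern Judging) have identical ESS
conditions: each is an ESS iff `b/c > 1/((1-2μ)(1-μ_e)(1-ε_DC))`. -/
theorem stmt_8 (μ μe ε b c : ℝ)
    (hμ : μ ∈ Set.Ico (0 : ℝ) (1/2)) (hμe : μe ∈ Set.Ico (0 : ℝ) 1)
    (hε : ε ∈ Set.Ico (0 : ℝ) 1) (hbc : b > c) (hc : 0 < c)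
    (tilde : ℝ → ℝ) (htilde : ∀ R : ℝ, tilde R = (1 - μ) * R + μ * (1 - R))
    -- good recipient (both L3 and L6: R(·,G,C)=1, R(·,G,D)=0)
    (RdCG RdDG : ℝ)
    (hRdDG : RdDG = (1 - ε) * tilde 0 + ε * tilde 1)
    (hRdCG : RdCG = (1 - μe) * tilde 1 + μe * RdDG)
    -- bad recipient, L3: R(·,B,C)=1, R(·,B,D)=1
    (RdCB3 RdDB3 : ℝ)
    (hRdDB3 : RdDB3 = (1 - ε) * tilde 1 + ε * tilde 1)
    (hRdCB3 : RdCB3 = (1 - μe) * tilde 1 + μe * RdDB3)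
    -- bad recipient, L6: R(·,B,C)=0, R(·,B,D)=1
    (RdCB6 RdDB6 : ℝ)
    (hRdDB6 : RdDB6 = (1 - ε) * tilde 1 + ε * tilde 0)
    (hRdCB6 : RdCB6 = (1 - μe) * tilde 0 + μe * RdDB6)
    (bd cd Δvd : ℝ)
    (hbd : bd = (1 - μe) * b) (hcd : cd = (1 - μe) * c) (hΔvd : Δvd = bd) :
    (((RdCG - RdDG) * Δvd > cd ∧ (RdCB3 - RdDB3) * Δvd < cd) ↔
      b / c > 1 / ((1 - 2 * μ) * (1 - μe) * (1 - ε))) ∧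
    (((RdCG - RdDG) * Δvd > cd ∧ (RdCB6 - RdDB6) * Δvd < cd) ↔
      b / c > 1 / ((1 - 2 * μ) * (1 - μe) * (1 - ε))) := by

  obtain ⟨hμ0, hμ1⟩ := hμ
  obtain ⟨hμe0, hμe1⟩ := hμe
  obtain ⟨hε0, hε1⟩ := hε
  subst hΔvd hbd hcd hRdCG hRdDG hRdCB3 hRdDB3 hRdCB6 hRdDB6
  rw [htilde, htilde]
  have h2μ : 0 < 1 - 2 * μ := by linarith
  have hμe' : 0 < 1 - μe := by linarith
  have hε' : 0 < 1 - ε := by linarith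
  have hK : 0 < (1 - 2 * μ) * (1 - μe) * (1 - ε) := by positivity
  have key : b / c > 1 / ((1 - 2 * μ) * (1 - μe) * (1 - ε)) ↔
      (1 - 2 * μ) * (1 - μe) * (1 - ε) * b > c := by
    rw [gt_iff_lt, div_lt_div_iff₀ hK hc]
    constructor <;> intro h <;> nlinarith
  constructor
  · constructor
    · rintro ⟨h1, _⟩
      rw [key]; nlinarith
    · intro h
      rw [key] at h
      constructor
      · nlinarith
      · nlinarith
  · constructor
    · rintro ⟨h1, _⟩
      rw [key]; nlinarith
    · intro h
      rw [key] at h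
      constructor
      · nlinarith
      · nlinarith
end

section
/- For the L7 (Staying) norm with errors, Δv = b/(1 − (1−h*)(1−2μ)), and for the L8 (Judging) norm, Δv = b/(1 − (1−h*)(1−2μ)(1−ε_DC)). In both cases, for h* ∈ (0,1), μ ∈ (0,1/2), ε_DC ∈ [0,1), we have Δv ≥ b, with Δv > b when h* < 1 and μ < 1/2. -/
/-- For L7 (Staying), `Δv = b/(1-(1-h*)(1-2μ))`, and for L8 (Judging),
`Δv = b/(1-(1-h*)(1-2μ)(1-ε_DC))`; both satisfy `Δv ≥ b`, strictly when
`h* < 1` and `μ < 1/2`. -/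
theorem stmt_9 (b μ ε hstar ΔvL7 ΔvL8 : ℝ)
    (hb : 0 < b) (hh : hstar ∈ Set.Ioo (0 : ℝ) 1)
    (hμ : μ ∈ Set.Ioo (0 : ℝ) (1/2)) (hε : ε ∈ Set.Ico (0 : ℝ) 1)
    (h7 : ΔvL7 = b / (1 - (1 - hstar) * (1 - 2 * μ)))
    (h8 : ΔvL8 = b / (1 - (1 - hstar) * (1 - 2 * μ) * (1 - ε))) :
    ΔvL7 ≥ b ∧ ΔvL8 ≥ b ∧
    (hstar < 1 → μ < 1/2 → b < ΔvL7 ∧ b < ΔvL8) := by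
  obtain ⟨hh0, hh1⟩ := hh
  obtain ⟨hμ0, hμ1⟩ := hμ
  obtain ⟨hε0, hε1⟩ := hε
  have hx7 : 0 < (1 - hstar) * (1 - 2 * μ) := by nlinarith
  have hx7' : (1 - hstar) * (1 - 2 * μ) < 1 := by nlinarith
  have hx8 : 0 < (1 - hstar) * (1 - 2 * μ) * (1 - ε) := by nlinarith
  have hx8' : (1 - hstar) * (1 - 2 * μ) * (1 - ε) < 1 := by nlinarith
  have d7 : 0 < 1 - (1 - hstar) * (1 - 2 * μ) := by linarith
  have d8 : 0 < 1 - (1 - hstar) * (1 - 2 * μ) * (1 - ε) := by linarith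
  have l7 : b < ΔvL7 := by
    rw [h7, lt_div_iff₀ d7]; nlinarith
  have l8 : b < ΔvL8 := by
    rw [h8, lt_div_iff₀ d8]; nlinarith
  exact ⟨le_of_lt l7, le_of_lt l8, fun _ _ => ⟨l7, l8⟩⟩
end

section
/- The Generous Scoring norm GSCO, defined by S(·,G)=C, S(·,B)=D, R(·,·,C)=1, R(·,·,D)=1 − c/((1−2μ)b), satisfies the equalizer condition [R̃(X,Y,C) − R̃(X,Y,D)]·Δv = c for all contexts (X,Y), where R̃ = (1−μ)R + μ(1−R) and Δv = b. In particular, R̃(X,Y,C) − R̃(X,Y,D) = c/b for all X,Y. -/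
theorem noisy_sub_noisy (μ x y : ℝ) :
    ((1 - μ) * x + μ * (1 - x)) - ((1 - μ) * y + μ * (1 - y)) = (1 - 2 * μ) * (x - y) := by
  ring

theorem mul_one_sub_one_sub_div_mul {a b c : ℝ} (ha : a ≠ 0) :
    a * (1 - (1 - c / (a * b))) = c / b := by
  rw [sub_sub_cancel, mul_div_assoc', mul_div_mul_left c b ha]

theorem stmt_11_general (μ b c Δv : ℝ)
    (hμ : μ < 1/2) (hc : 0 < c) (hcb : c < (1 - 2 * μ) * b)
    (tilde : ℝ → ℝ) (htilde : ∀ R : ℝ, tilde R = (1 - μ) * R + μ * (1 - R))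
    (RC RD : Bool → Bool → ℝ)
    (hRC : ∀ X Y : Bool, RC X Y = 1)
    (hRD : ∀ X Y : Bool, RD X Y = 1 - c / ((1 - 2 * μ) * b))
    (hΔv : Δv = b) :
    (∀ X Y : Bool, (tilde (RC X Y) - tilde (RD X Y)) * Δv = c) ∧
    (∀ X Y : Bool, tilde (RC X Y) - tilde (RD X Y) = c / b) := by
  have hμ' : 0 < 1 - 2 * μ := by linarith
  have hb : 0 < b := pos_of_mul_pos_right (hc.trans hcb) hμ'.le
  have hdiff : ∀ X Y : Bool, tilde (RC X Y) - tilde (RD X Y) = c / b := fun X Y => by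
    rw [htilde, htilde, noisy_sub_noisy, hRC, hRD, mul_one_sub_one_sub_div_mul hμ'.ne']
  refine ⟨fun X Y => ?_, hdiff⟩
  rw [hdiff, hΔv, div_mul_cancel₀ c hb.ne']

/-- Generous Scoring (GSCO): `R(·,·,C) = 1`, `R(·,·,D) = 1 - c/((1-2μ)b)`.
With `R̃ = (1-μ)R + μ(1-R)` and `Δv = b`, the equalizer condition
`[R̃(X,Y,C) - R̃(X,Y,D)]·Δv = c` holds in every context, and
`R̃(X,Y,C) - R̃(X,Y,D) = c/b`. -/
theorem stmt_11 (μ b c Δv : ℝ)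
    (hμ0 : 0 < μ) (hμ : μ < 1/2) (hc : 0 < c) (hcb : c < (1 - 2 * μ) * b)
    (tilde : ℝ → ℝ) (htilde : ∀ R : ℝ, tilde R = (1 - μ) * R + μ * (1 - R))
    (RC RD : Bool → Bool → ℝ)
    (hRC : ∀ X Y : Bool, RC X Y = 1)
    (hRD : ∀ X Y : Bool, RD X Y = 1 - c / ((1 - 2 * μ) * b))
    (hΔv : Δv = b) :
    (∀ X Y : Bool, (tilde (RC X Y) - tilde (RD X Y)) * Δv = c) ∧
    (∀ X Y : Bool, tilde (RC X Y) - tilde (RD X Y) = c / b) :=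
  stmt_11_general μ b c Δv hμ hc hcb tilde htilde RC RD hRC hRD hΔv
end

section
/- The Cautious Scoring norm, defined by S(·,G)=C, S(·,B)=D, R(·,G,C)=1, R(·,G,D)=1−c/((1−2μ)b), R(·,B,C)=c/((1−2μ)b), R(·,B,D)=0, satisfies the equalizer condition [R̃(X,Y,C) − R̃(X,Y,D)]·Δv = c for all contexts (X,Y), where R̃ = (1−μ)R + μ(1−R) and Δv = b. -/
/-! The assessment error `μ` turns an assessment probability `R` into `μ + (1 - 2μ) R`, so the
equalizer gap `R̃(X,Y,C) - R̃(X,Y,D)` is `(1 - 2μ)` times the raw gap `R(X,Y,C) - R(X,Y,D)`.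
Cautious Scoring makes the raw gap equal to `c / ((1 - 2μ) b)` for good and bad recipients alike,
and multiplying by `Δv = b` leaves exactly `c`. -/

theorem noisy_assessment_sub {R : Type*} [CommRing R] (μ x y : R) :
    (1 - μ) * x + μ * (1 - x) - ((1 - μ) * y + μ * (1 - y)) = (1 - 2 * μ) * (x - y) := by
  ring

theorem stmt_12_general (μ b c Δv : ℝ)
    (hc : 0 < c) (hcb : c < (1 - 2 * μ) * b)
    (tilde : ℝ → ℝ) (htilde : ∀ R : ℝ, tilde R = (1 - μ) * R + μ * (1 - R))
    (RC RD : Bool → Bool → ℝ)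
    (hRCG : ∀ X : Bool, RC X true = 1)
    (hRDG : ∀ X : Bool, RD X true = 1 - c / ((1 - 2 * μ) * b))
    (hRCB : ∀ X : Bool, RC X false = c / ((1 - 2 * μ) * b))
    (hRDB : ∀ X : Bool, RD X false = 0)
    (hΔv : Δv = b) :
    ∀ X Y : Bool, (tilde (RC X Y) - tilde (RD X Y)) * Δv = c := by
  have hscale : (1 - 2 * μ) * b ≠ 0 := (hc.trans hcb).ne'
  have hgap : ∀ X Y : Bool, RC X Y - RD X Y = c / ((1 - 2 * μ) * b) := by
    intro X Y
    cases Y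
    · rw [hRCB, hRDB, sub_zero]
    · rw [hRCG, hRDG, sub_sub_cancel]
  intro X Y
  rw [htilde, htilde, noisy_assessment_sub, hgap, hΔv, mul_right_comm, mul_div_cancel₀ c hscale]

/-- Cautious Scoring: `R(·,G,C)=1`, `R(·,G,D)=1-c/((1-2μ)b)`,
`R(·,B,C)=c/((1-2μ)b)`, `R(·,B,D)=0`. With `R̃ = (1-μ)R + μ(1-R)` and
`Δv = b`, the equalizer condition `[R̃(X,Y,C) - R̃(X,Y,D)]·Δv = c` holds in
every context. -/
theorem stmt_12 (μ b c Δv : ℝ)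
    (hμ0 : 0 < μ) (hμ : μ < 1/2) (hc : 0 < c) (hcb : c < (1 - 2 * μ) * b)
    (tilde : ℝ → ℝ) (htilde : ∀ R : ℝ, tilde R = (1 - μ) * R + μ * (1 - R))
    (RC RD : Bool → Bool → ℝ)
    (hRCG : ∀ X : Bool, RC X true = 1)
    (hRDG : ∀ X : Bool, RD X true = 1 - c / ((1 - 2 * μ) * b))
    (hRCB : ∀ X : Bool, RC X false = c / ((1 - 2 * μ) * b))
    (hRDB : ∀ X : Bool, RD X false = 0)
    (hΔv : Δv = b) :
    ∀ X Y : Bool, (tilde (RC X Y) - tilde (RD X Y)) * Δv = c :=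
  stmt_12_general μ b c Δv hc hcb tilde htilde RC RD hRCG hRDG hRCB hRDB hΔv
end

section
/- For deterministic assessment rules in the vanishing-error limit, the CESS conditions with S(B,G)=C (conditions: R(G,G,C)=1, [R(G,G,C)−R(G,G,D)]b > c·R(B,G,C), [R(B,G,C)−R(B,G,D)]b > c·R(B,G,C), [R(G,B,C)−R(G,B,D)]b < c·R(B,G,C), R(G,B,D)+R(B,G,C) > 1, with all R-values in {0,1} and b > c > 0) force R(G,G,C)=1, R(G,G,D)=0, R(B,G,C)=1, R(B,G,D)=0, and R(G,B,D)=1, and these are satisfiable precisely when b > c. -/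
/-- Deterministic CESS with `S(B,G)=C` (leading eight): the CESS conditions
over `{0,1}`-valued assessments force `R(G,G,C)=1`, `R(G,G,D)=0`,
`R(B,G,C)=1`, `R(B,G,D)=0`, `R(G,B,D)=1`, and are satisfiable iff `b > c`. -/
theorem stmt_16 (b c : ℝ) (hb : 0 < b) (hc : 0 < c) :
    (∀ RGGC RGGD RBGC RBGD RGBC RGBD : ℝ,
      RGGC ∈ ({0, 1} : Set ℝ) → RGGD ∈ ({0, 1} : Set ℝ) →
      RBGC ∈ ({0, 1} : Set ℝ) → RBGD ∈ ({0, 1} : Set ℝ) →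
      RGBC ∈ ({0, 1} : Set ℝ) → RGBD ∈ ({0, 1} : Set ℝ) →
      RGGC = 1 →
      (RGGC - RGGD) * b > c * RBGC →
      (RBGC - RBGD) * b > c * RBGC →
      (RGBC - RGBD) * b < c * RBGC →
      RGBD + RBGC > 1 →
      (RGGC = 1 ∧ RGGD = 0 ∧ RBGC = 1 ∧ RBGD = 0 ∧ RGBD = 1)) ∧
    ((∃ RGGC RGGD RBGC RBGD RGBC RGBD : ℝ,
      RGGC ∈ ({0, 1} : Set ℝ) ∧ RGGD ∈ ({0, 1} : Set ℝ) ∧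
      RBGC ∈ ({0, 1} : Set ℝ) ∧ RBGD ∈ ({0, 1} : Set ℝ) ∧
      RGBC ∈ ({0, 1} : Set ℝ) ∧ RGBD ∈ ({0, 1} : Set ℝ) ∧
      RGGC = 1 ∧
      (RGGC - RGGD) * b > c * RBGC ∧
      (RBGC - RBGD) * b > c * RBGC ∧
      (RGBC - RGBD) * b < c * RBGC ∧
      RGBD + RBGC > 1) ↔ b > c) := by
  constructor
  · intro RGGC RGGD RBGC RBGD RGBC RGBD h1 h2 h3 h4 h5 h6 he c1 c2 c3 c4
    simp only [Set.mem_insert_iff, Set.mem_singleton_iff] at h1 h2 h3 h4 h5 h6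
    rcases h1 with h1 | h1 <;> rcases h2 with h2 | h2 <;> rcases h3 with h3 | h3 <;>
      rcases h4 with h4 | h4 <;> rcases h5 with h5 | h5 <;> rcases h6 with h6 | h6 <;>
      subst h1 <;> subst h2 <;> subst h3 <;> subst h4 <;> subst h5 <;> subst h6 <;>
      norm_num at * <;> first | linarith | ((constructorm* _ ∧ _) <;> first | trivial | linarith)
  · constructor
    · rintro ⟨RGGC, RGGD, RBGC, RBGD, RGBC, RGBD, h1, h2, h3, h4, h5, h6, he, c1, c2, c3, c4⟩
      simp only [Set.mem_insert_iff, Set.mem_singleton_iff] at h1 h2 h3 h4 h5 h6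
      rcases h1 with h1 | h1 <;> rcases h2 with h2 | h2 <;> rcases h3 with h3 | h3 <;>
        rcases h4 with h4 | h4 <;> rcases h5 with h5 | h5 <;> rcases h6 with h6 | h6 <;>
        subst h1 <;> subst h2 <;> subst h3 <;> subst h4 <;> subst h5 <;> subst h6 <;>
        norm_num at * <;> linarith
    · intro hbc
      exact ⟨1, 0, 1, 0, 0, 1, by norm_num, by norm_num, by norm_num, by norm_num,
        by norm_num, by norm_num, rfl, by linarith, by linarith, by linarith [mul_pos hc hb],
        by norm_num⟩
end

section
/- For deterministic assessment rules in the vanishing-error limit, with b > c > 0, the CESS conditions with S(B,G)=D (conditions: R(G,G,C)=1, [R(G,G,C)−R(G,G,D)](b−c) > c·R(B,G,D), [R(G,B,C)−R(G,B,D)](b−c) < c·R(B,G,D), [R(B,G,C)−R(B,G,D)](b−c) < c·R(B,G,D), R(G,B,D)+R(B,G,D) > 1, with all R-values in {0,1}) force R(G,G,C)=1, R(G,G,D)=0, R(B,G,D)=1, R(G,B,D)=1, and are satisfiable precisely when b > 2c. -/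
/-- Deterministic CESS with `S(B,G)=D` (secondary sixteen): the CESS
conditions over `{0,1}`-valued assessments force `R(G,G,C)=1`, `R(G,G,D)=0`,
`R(B,G,D)=1`, `R(G,B,D)=1`, and are satisfiable iff `b > 2c`
(given `b > c > 0`). -/
theorem stmt_17 (b c : ℝ) (hbc : b > c) (hc : 0 < c) :
    (∀ RGGC RGGD RBGC RBGD RGBC RGBD : ℝ,
      RGGC ∈ ({0, 1} : Set ℝ) → RGGD ∈ ({0, 1} : Set ℝ) →
      RBGC ∈ ({0, 1} : Set ℝ) → RBGD ∈ ({0, 1} : Set ℝ) →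
      RGBC ∈ ({0, 1} : Set ℝ) → RGBD ∈ ({0, 1} : Set ℝ) →
      RGGC = 1 →
      (RGGC - RGGD) * (b - c) > c * RBGD →
      (RGBC - RGBD) * (b - c) < c * RBGD →
      (RBGC - RBGD) * (b - c) < c * RBGD →
      RGBD + RBGD > 1 →
      (RGGC = 1 ∧ RGGD = 0 ∧ RBGD = 1 ∧ RGBD = 1)) ∧
    ((∃ RGGC RGGD RBGC RBGD RGBC RGBD : ℝ,
      RGGC ∈ ({0, 1} : Set ℝ) ∧ RGGD ∈ ({0, 1} : Set ℝ) ∧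
      RBGC ∈ ({0, 1} : Set ℝ) ∧ RBGD ∈ ({0, 1} : Set ℝ) ∧
      RGBC ∈ ({0, 1} : Set ℝ) ∧ RGBD ∈ ({0, 1} : Set ℝ) ∧
      RGGC = 1 ∧
      (RGGC - RGGD) * (b - c) > c * RBGD ∧
      (RGBC - RGBD) * (b - c) < c * RBGD ∧
      (RBGC - RBGD) * (b - c) < c * RBGD ∧
      RGBD + RBGD > 1) ↔ b > 2 * c) := by
  constructor
  · rintro RGGC RGGD RBGC RBGD RGBC RGBD h1 h2 h3 h4 h5 h6 hgc hi1 hi2 hi3 hi4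
    simp only [Set.mem_insert_iff, Set.mem_singleton_iff] at h1 h2 h3 h4 h5 h6
    rcases h4 with h4 | h4 <;> rcases h6 with h6 | h6 <;>
      rcases h2 with h2 | h2 <;> subst h2 <;> subst h4 <;> subst h6 <;>
      refine ⟨hgc, ?_, ?_, ?_⟩ <;> nlinarith
  · constructor
    · rintro ⟨RGGC, RGGD, RBGC, RBGD, RGBC, RGBD, h1, h2, h3, h4, h5, h6,
        hgc, hi1, hi2, hi3, hi4⟩
      simp only [Set.mem_insert_iff, Set.mem_singleton_iff] at h1 h2 h3 h4 h5 h6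
      rcases h4 with h4 | h4 <;> rcases h6 with h6 | h6 <;>
        rcases h2 with h2 | h2 <;> subst h2 <;> subst h4 <;> subst h6 <;>
        subst hgc <;> nlinarith
    · intro hb
      refine ⟨1, 0, 1, 1, 1, 1, by simp, by simp, by simp, by simp, by simp,
        by simp, rfl, by nlinarith, by nlinarith, by nlinarith, by norm_num⟩
end
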